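/- arXiv:1509.08282 — 3 statements merged into one kernel-verified Lean document; each statement's English description precedes it below -/
import Mathlib

section
/- Let Φ : [β, α] \ {w₁} → ℝ with β < w₁ < α. Suppose Φ is continuous and strictly increasing on [β, w₁) and on (w₁, α], with lim_{w→w₁⁻} Φ(w) = α, lim_{w→w₁⁺} Φ(w) = β, Φ([β,α]\{w₁}) ⊆ [β, α], and additionally Φ(α) < w₁ < Φ(β). Then Φ² has a fixed point w* ∈ (β, w₁), and the orbit {w*, Φ(w*)} is a period-2 orbit of Φ with Φ(w*) ∈ (w₁, α). -/
open Set Filter Topology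

/-- For an adaptation-type map Φ with one discontinuity w₁ in the invariant interval
[β, α], increasing and continuous on each side of w₁ with limits α at w₁⁻ and β at w₁⁺,
if moreover Φ(α) < w₁ < Φ(β) then Φ² has a fixed point w* ∈ (β, w₁) and {w*, Φ(w*)}
is a period-2 orbit of Φ with Φ(w*) ∈ (w₁, α). -/
theorem period_two_orbit_exists
    (Φ : ℝ → ℝ) (β α w₁ : ℝ)
    (hβw : β < w₁) (hwα : w₁ < α)
    (hcontL : ContinuousOn Φ (Set.Ico β w₁))
    (hcontR : ContinuousOn Φ (Set.Ioc w₁ α))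
    (hmonoL : StrictMonoOn Φ (Set.Ico β w₁))
    (hmonoR : StrictMonoOn Φ (Set.Ioc w₁ α))
    (hlimL : Tendsto Φ (𝓝[<] w₁) (𝓝 α))
    (hlimR : Tendsto Φ (𝓝[>] w₁) (𝓝 β))
    (hinv : ∀ w ∈ Set.Icc β α, w ≠ w₁ → Φ w ∈ Set.Icc β α)
    (hα : Φ α < w₁) (hβ : w₁ < Φ β) :
    ∃ w : ℝ, w ∈ Set.Ioo β w₁ ∧ Φ (Φ w) = w ∧ Φ w ∈ Set.Ioo w₁ α := by
  -- Step 1: Φ maps [β, w₁) into (w₁, α]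
  have h1 : ∀ w ∈ Set.Ico β w₁, Φ w ∈ Set.Ioc w₁ α := by
    intro w hw
    obtain ⟨hwβ, hww₁⟩ := hw
    have hne : w ≠ w₁ := ne_of_lt hww₁
    have hmem : w ∈ Set.Icc β α := ⟨hwβ, le_of_lt (lt_trans hww₁ hwα)⟩
    have hIcc := hinv w hmem hne
    constructor
    · rcases eq_or_lt_of_le hwβ with h | h
      · rw [← h]; exact hβ
      · exact lt_trans hβ (hmonoL ⟨le_refl β, hβw⟩ ⟨hwβ, hww₁⟩ h)
    · exact hIcc.2
  -- Step 2: Φ maps (w₁, α] into [β, w₁), in fact into (β, w₁)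
  have h2 : ∀ x ∈ Set.Ioc w₁ α, Φ x ∈ Set.Ioo β w₁ := by
    intro x hx
    obtain ⟨hxw₁, hxα⟩ := hx
    have hne : x ≠ w₁ := ne_of_gt hxw₁
    have hmem : x ∈ Set.Icc β α := ⟨le_of_lt (lt_trans hβw hxw₁), hxα⟩
    have hIcc := hinv x hmem hne
    constructor
    · -- Φ x > β : take t strictly between w₁ and x
      set t := (w₁ + x) / 2 with ht
      have htw : w₁ < t := by simp [ht]; linarith
      have htx : t < x := by simp [ht]; linarith
      have htmem : t ∈ Set.Ioc w₁ α := ⟨htw, le_of_lt (lt_of_lt_of_le htx hxα)⟩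
      have := hmonoR htmem ⟨hxw₁, hxα⟩ htx
      have hΦt := hinv t ⟨le_of_lt (lt_trans hβw htw), htmem.2⟩ (ne_of_gt htw)
      linarith [hΦt.1]
    · rcases eq_or_lt_of_le hxα with h | h
      · rw [h]; exact hα
      · exact lt_trans (hmonoR ⟨hxw₁, hxα⟩ ⟨hwα, le_refl α⟩ h) hα
  -- Step 3: find b ∈ (β, w₁) with Φ(Φ b) < b
  have hαmem : α ∈ Set.Ioc w₁ α := ⟨hwα, le_refl α⟩
  have htend : Tendsto (fun w => Φ (Φ w)) (𝓝[<] w₁) (𝓝 (Φ α)) := by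
    have hev : ∀ᶠ w in 𝓝[<] w₁, Φ w ∈ Set.Ioc w₁ α := by
      filter_upwards [Ioo_mem_nhdsLT_of_mem (show w₁ ∈ Set.Ioc β w₁ from ⟨hβw, le_refl w₁⟩)]
        with w hw
      exact h1 w ⟨le_of_lt hw.1, hw.2⟩
    have : Tendsto Φ (𝓝[<] w₁) (𝓝[Set.Ioc w₁ α] α) :=
      tendsto_nhdsWithin_iff.mpr ⟨hlimL, hev⟩
    exact (hcontR α hαmem).tendsto.comp this
  set c := (Φ α + w₁) / 2 with hc
  have hcw : c < w₁ := by simp [hc]; linarith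
  have hcΦα : Φ α < c := by simp [hc]; linarith
  have hev2 : ∀ᶠ w in 𝓝[<] w₁, Φ (Φ w) < c := htend.eventually (Filter.Tendsto.eventually_lt_const hcΦα tendsto_id)
  have hev3 : ∀ᶠ w in 𝓝[<] w₁, w ∈ Set.Ioo (max β c) w₁ :=
    Ioo_mem_nhdsLT_of_mem ⟨max_lt hβw hcw, le_refl w₁⟩
  obtain ⟨b, hb1, hb2⟩ := (hev2.and hev3).exists
  have hbβ : β < b := lt_of_le_of_lt (le_max_left β c) hb2.1
  have hbw₁ : b < w₁ := hb2.2
  have hbc : c < b := lt_of_le_of_lt (le_max_right β c) hb2.1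
  have hgb : Φ (Φ b) < b := lt_trans hb1 hbc
  -- Step 4: g = Φ∘Φ is continuous on [β, b] and g β > β
  have hsub : Set.Icc β b ⊆ Set.Ico β w₁ := Set.Icc_subset_Ico_right hbw₁
  have hmaps : Set.MapsTo Φ (Set.Icc β b) (Set.Ioc w₁ α) := fun w hw => h1 w (hsub hw)
  have hgcont : ContinuousOn (fun w => Φ (Φ w) - w) (Set.Icc β b) := by
    have : ContinuousOn (fun w => Φ (Φ w)) (Set.Icc β b) :=
      hcontR.comp (hcontL.mono hsub) hmaps
    exact this.sub continuousOn_id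
  have hgβ : β < Φ (Φ β) := (h2 (Φ β) (h1 β ⟨le_refl β, hβw⟩)).1
  -- Step 5: IVT
  have h0 : (0 : ℝ) ∈ Set.Ioo (Φ (Φ b) - b) (Φ (Φ β) - β) := ⟨by linarith, by linarith⟩
  have := intermediate_value_Ioo' (le_of_lt hbβ : β ≤ b) hgcont
  obtain ⟨w, hwmem, hw0⟩ := this h0
  refine ⟨w, ⟨hwmem.1, lt_trans hwmem.2 hbw₁⟩, by have : Φ (Φ w) - w = 0 := hw0; linarith, ?_⟩
  · -- Φ w ∈ Ioo w₁ α
    have hwIco : w ∈ Set.Ico β w₁ := ⟨le_of_lt hwmem.1, lt_trans hwmem.2 hbw₁⟩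
    have hΦw := h1 w hwIco
    refine ⟨hΦw.1, ?_⟩
    rcases eq_or_lt_of_le hΦw.2 with h | h
    · -- Φ w = α impossible: take t ∈ (w, w₁), Φ t > Φ w = α but Φ t ≤ α
      exfalso
      set t := (w + w₁) / 2 with ht
      have htw : w < t := by simp [ht]; linarith [hwIco.2]
      have htw₁ : t < w₁ := by simp [ht]; linarith [hwIco.2]
      have htmem : t ∈ Set.Ico β w₁ := ⟨le_of_lt (lt_of_le_of_lt hwIco.1 htw), htw₁⟩
      have h3 := hmonoL hwIco htmem htw
      have h4 := (hinv t ⟨htmem.1, le_of_lt (lt_trans htw₁ hwα)⟩ (ne_of_lt htw₁)).2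
      rw [h] at h3
      linarith
    · exact h
end

section
/- Let Φ : [β, α] \ {w₁} → [β, α] with β < w₁ < α, continuous and strictly increasing on each of [β, w₁) and (w₁, α], with lim_{w→w₁⁻}Φ(w) = α and lim_{w→w₁⁺}Φ(w) = β. Suppose Φ has no fixed point in [β, w₁) and has a fixed point w_f ∈ (w₁, α), and Φ(β) ≥ w_f, and α ≤ w* where Φ is increasing on (w₁, α]. Then the interval [w_f, α] is invariant under Φ, Φ is continuous and increasing on [w_f, α], and every orbit of Φ starting in [β, α] \ {w₁} (avoiding preimages of w₁) eventually enters [w_f, α] and converges to a fixed point of Φ in [w_f, α]. -/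
open Set Filter Topology

/-- Orbits of a continuous monotone self-map of a compact interval converge to a fixed point. -/
lemma orbit_converges {f : ℝ → ℝ} {a b : ℝ}
    (hmap : Set.MapsTo f (Set.Icc a b) (Set.Icc a b))
    (hcont : ContinuousOn f (Set.Icc a b))
    (hmono : MonotoneOn f (Set.Icc a b))
    {x : ℝ} (hx : x ∈ Set.Icc a b) :
    ∃ L ∈ Set.Icc a b, f L = L ∧ Tendsto (fun n : ℕ => f^[n] x) atTop (𝓝 L) := by
  have mem : ∀ n : ℕ, f^[n] x ∈ Set.Icc a b := by
    intro n; induction n with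
    | zero => simpa using hx
    | succ n ih => rw [Function.iterate_succ_apply']; exact hmap ih
  -- a key step: from convergence within the interval deduce the limit is fixed
  have key : ∀ L : ℝ, L ∈ Set.Icc a b → Tendsto (fun n : ℕ => f^[n] x) atTop (𝓝 L) →
      f L = L := by
    intro L hL ht
    have htw : Tendsto (fun n : ℕ => f^[n] x) atTop (𝓝[Set.Icc a b] L) :=
      tendsto_nhdsWithin_of_tendsto_nhds_of_eventually_within _ ht
        (Eventually.of_forall mem)
    have h1 : Tendsto (fun n : ℕ => f (f^[n] x)) atTop (𝓝 (f L)) :=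
      (hcont L hL).tendsto.comp htw
    have h2 : Tendsto (fun n : ℕ => f^[n+1] x) atTop (𝓝 L) :=
      ht.comp (tendsto_add_atTop_nat 1)
    have h2' : Tendsto (fun n : ℕ => f (f^[n] x)) atTop (𝓝 L) := by
      simpa [Function.iterate_succ_apply'] using h2
    exact tendsto_nhds_unique h1 h2'
  rcases le_total x (f x) with hc | hc
  · have hmo : Monotone (fun n : ℕ => f^[n] x) := by
      apply monotone_nat_of_le_succ
      intro n
      induction n with
      | zero => simpa using hc
      | succ n ih =>
        rw [Function.iterate_succ_apply', Function.iterate_succ_apply']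
        exact hmono (mem n) (mem (n+1)) (by simpa [Function.iterate_succ_apply'] using ih)
    have hbdd : BddAbove (Set.range fun n : ℕ => f^[n] x) :=
      ⟨b, by rintro y ⟨n, rfl⟩; exact (mem n).2⟩
    have ht := tendsto_atTop_ciSup hmo hbdd
    set L := ⨆ n : ℕ, f^[n] x with hLdef
    have hL : L ∈ Set.Icc a b := by
      constructor
      · exact le_trans (mem 0).1 (le_ciSup hbdd 0)
      · exact ciSup_le fun n => (mem n).2
    exact ⟨L, hL, key L hL ht, ht⟩
  · have hmo : Antitone (fun n : ℕ => f^[n] x) := by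
      apply antitone_nat_of_succ_le
      intro n
      induction n with
      | zero => simpa using hc
      | succ n ih =>
        have h := hmono (mem (n+1)) (mem n) ih
        rw [← Function.iterate_succ_apply' f (n+1) x, ← Function.iterate_succ_apply' f n x] at h
        exact h
    have hbdd : BddBelow (Set.range fun n : ℕ => f^[n] x) :=
      ⟨a, by rintro y ⟨n, rfl⟩; exact (mem n).1⟩
    have ht := tendsto_atTop_ciInf hmo hbdd
    set L := ⨅ n : ℕ, f^[n] x with hLdef
    have hL : L ∈ Set.Icc a b := by
      constructor
      · exact le_ciInf fun n => (mem n).1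
      · exact le_trans (ciInf_le hbdd 0) (mem 0).2
    exact ⟨L, hL, key L hL ht, ht⟩

/-- Overlapping case with Φ(β) ≥ w_f: if Φ has no fixed point in [β, w₁), w_f is the
smallest fixed point in (w₁, α), and Φ is increasing on (w₁, α], then [w_f, α] is
invariant, Φ is continuous and increasing there, and every orbit avoiding the
preimages of w₁ eventually enters [w_f, α] and converges to a fixed point therein. -/
theorem orbits_converge_to_fixed_point_overlapping
    (Φ : ℝ → ℝ) (β α w₁ w_f : ℝ)
    (hβw : β < w₁) (hwα : w₁ < α)
    (hcontL : ContinuousOn Φ (Set.Ico β w₁))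
    (hcontR : ContinuousOn Φ (Set.Ioc w₁ α))
    (hmonoL : StrictMonoOn Φ (Set.Ico β w₁))
    (hmonoR : StrictMonoOn Φ (Set.Ioc w₁ α))
    (hlimL : Tendsto Φ (𝓝[<] w₁) (𝓝 α))
    (hlimR : Tendsto Φ (𝓝[>] w₁) (𝓝 β))
    (hinv : ∀ w ∈ Set.Icc β α, w ≠ w₁ → Φ w ∈ Set.Icc β α)
    (hnofixL : ∀ w ∈ Set.Ico β w₁, Φ w ≠ w)
    (hwf : w_f ∈ Set.Ioo w₁ α) (hfix : Φ w_f = w_f)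
    (hsmallest : ∀ w ∈ Set.Ioo w₁ w_f, Φ w ≠ w)
    (hΦβ : w_f ≤ Φ β) :
    Set.MapsTo Φ (Set.Icc w_f α) (Set.Icc w_f α) ∧
    ContinuousOn Φ (Set.Icc w_f α) ∧
    MonotoneOn Φ (Set.Icc w_f α) ∧
    (∀ w ∈ Set.Icc β α, (∀ n : ℕ, Φ^[n] w ≠ w₁) →
      (∃ N : ℕ, ∀ n ≥ N, Φ^[n] w ∈ Set.Icc w_f α) ∧
      ∃ w' ∈ Set.Icc w_f α, Φ w' = w' ∧
        Tendsto (fun n : ℕ => Φ^[n] w) atTop (𝓝 w')) := by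
  obtain ⟨hwf1, hwf2⟩ := hwf
  have hsub : Set.Icc w_f α ⊆ Set.Ioc w₁ α := fun x hx => ⟨lt_of_lt_of_le hwf1 hx.1, hx.2⟩
  have hmap : Set.MapsTo Φ (Set.Icc w_f α) (Set.Icc w_f α) := by
    intro x hx
    have hx1 : w₁ < x := lt_of_lt_of_le hwf1 hx.1
    refine ⟨?_, (hinv x ⟨by linarith [hx.1], hx.2⟩ (ne_of_gt hx1)).2⟩
    calc w_f = Φ w_f := hfix.symm
      _ ≤ Φ x := hmonoR.monotoneOn ⟨hwf1, hwf2.le⟩ ⟨hx1, hx.2⟩ hx.1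
  have hcont' : ContinuousOn Φ (Set.Icc w_f α) := hcontR.mono hsub
  have hmono' : MonotoneOn Φ (Set.Icc w_f α) := hmonoR.monotoneOn.mono hsub
  have hΦleft : ∀ x ∈ Set.Ico β w₁, Φ x ∈ Set.Icc w_f α := by
    intro x hx
    refine ⟨le_trans hΦβ ?_, (hinv x ⟨hx.1, by linarith [hx.2]⟩ (ne_of_lt hx.2)).2⟩
    exact hmonoL.monotoneOn ⟨le_rfl, hβw⟩ hx hx.1
  have hΦmid : ∀ x ∈ Set.Ioo w₁ w_f, Φ x < x := by
    intro x hx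
    by_contra h
    push_neg at h
    have hlt : x < Φ x := lt_of_le_of_ne h (Ne.symm (hsmallest x hx))
    have hev : ∀ᶠ y in 𝓝[>] w₁, Φ y < w₁ := hlimR.eventually_lt_const hβw
    have hmem : Set.Ioo w₁ x ∈ 𝓝[>] w₁ := Ioo_mem_nhdsGT_of_mem ⟨le_rfl, hx.1⟩
    obtain ⟨v, hv1, hv2⟩ := (hev.and (eventually_of_mem hmem fun y hy => hy)).exists
    have hsub2 : Set.Icc v x ⊆ Set.Ioc w₁ α := fun y hy =>
      ⟨lt_of_lt_of_le hv2.1 hy.1, le_trans hy.2 (by linarith [hx.2])⟩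
    have hgc : ContinuousOn (fun y => Φ y - y) (Set.Icc v x) :=
      (hcontR.mono hsub2).sub continuousOn_id
    have h0 : (0:ℝ) ∈ Set.Icc (Φ v - v) (Φ x - x) := ⟨by linarith [hv2.1], by linarith⟩
    obtain ⟨c, hc, hgc0⟩ := intermediate_value_Icc hv2.2.le hgc h0
    have hΦc : Φ c = c := by dsimp at hgc0; linarith
    exact hsmallest c ⟨lt_of_lt_of_le hv2.1 hc.1, lt_of_le_of_lt hc.2 hx.2⟩ hΦc
  refine ⟨hmap, hcont', hmono', ?_⟩
  intro w hwmem hne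
  have memall : ∀ n : ℕ, Φ^[n] w ∈ Set.Icc β α := by
    intro n
    induction n with
    | zero => simpa using hwmem
    | succ n ih => rw [Function.iterate_succ_apply']; exact hinv _ ih (hne n)
  have step : ∀ n : ℕ, Φ^[n] w < w₁ → Φ^[n+1] w ∈ Set.Icc w_f α := by
    intro n h
    rw [Function.iterate_succ_apply']
    exact hΦleft _ ⟨(memall n).1, h⟩
  have hexN : ∃ N : ℕ, Φ^[N] w ∈ Set.Icc w_f α := by
    by_contra hcon
    push_neg at hcon
    have all : ∀ n : ℕ, Φ^[n] w ∈ Set.Ioo w₁ w_f := by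
      intro n
      have h4 : ¬ Φ^[n] w < w₁ := fun h => hcon (n+1) (step n h)
      refine ⟨lt_of_le_of_ne (not_lt.mp h4) (Ne.symm (hne n)), ?_⟩
      by_contra h5
      push_neg at h5
      exact hcon n ⟨h5, (memall n).2⟩
    have dec : ∀ n : ℕ, Φ^[n+1] w < Φ^[n] w := by
      intro n
      rw [Function.iterate_succ_apply']
      exact hΦmid _ (all n)
    have hanti : Antitone (fun n : ℕ => Φ^[n] w) := antitone_nat_of_succ_le fun n => (dec n).le
    have hbdd : BddBelow (Set.range fun n : ℕ => Φ^[n] w) :=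
      ⟨w₁, by rintro y ⟨n, rfl⟩; exact (all n).1.le⟩
    have ht := tendsto_atTop_ciInf hanti hbdd
    set L := ⨅ n : ℕ, Φ^[n] w with hLdef
    have hLge : w₁ ≤ L := le_ciInf fun n => (all n).1.le
    have hLlt : L < w_f := lt_of_le_of_lt (ciInf_le hbdd 0) (by simpa using (all 0).2)
    have hshift : Tendsto (fun n : ℕ => Φ (Φ^[n] w)) atTop (𝓝 L) := by
      have h2 : Tendsto (fun n : ℕ => Φ^[n+1] w) atTop (𝓝 L) :=
        ht.comp (tendsto_add_atTop_nat 1)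
      simpa [Function.iterate_succ_apply'] using h2
    rcases eq_or_lt_of_le hLge with hL | hL
    · have htw : Tendsto (fun n : ℕ => Φ^[n] w) atTop (𝓝[>] w₁) := by
        refine tendsto_nhdsWithin_of_tendsto_nhds_of_eventually_within _ (hL ▸ ht) ?_
        exact Eventually.of_forall fun n => (all n).1
      have hβL : Tendsto (fun n : ℕ => Φ (Φ^[n] w)) atTop (𝓝 β) := hlimR.comp htw
      have : β = L := tendsto_nhds_unique hβL hshift
      linarith
    · have hLmem : L ∈ Set.Ioc w₁ α := ⟨hL, by linarith⟩
      have htw : Tendsto (fun n : ℕ => Φ^[n] w) atTop (𝓝[Set.Ioc w₁ α] L) :=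
        tendsto_nhdsWithin_of_tendsto_nhds_of_eventually_within _ ht
          (Eventually.of_forall fun n => ⟨(all n).1, (memall n).2⟩)
      have hΦL : Tendsto (fun n : ℕ => Φ (Φ^[n] w)) atTop (𝓝 (Φ L)) :=
        (hcontR L hLmem).tendsto.comp htw
      exact hsmallest L ⟨hL, hLlt⟩ (tendsto_nhds_unique hΦL hshift)
  obtain ⟨N, hN⟩ := hexN
  have iter_mem : ∀ k : ℕ, Φ^[k] (Φ^[N] w) ∈ Set.Icc w_f α := by
    intro k
    induction k with
    | zero => simpa using hN
    | succ k ih => rw [Function.iterate_succ_apply']; exact hmap ih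
  have hafter : ∀ n ≥ N, Φ^[n] w ∈ Set.Icc w_f α := by
    intro n hn
    obtain ⟨k, rfl⟩ := Nat.exists_eq_add_of_le hn
    rw [Nat.add_comm, Function.iterate_add_apply]
    exact iter_mem k
  obtain ⟨L, hL, hfixL, htL⟩ := orbit_converges hmap hcont' hmono' hN
  refine ⟨⟨N, hafter⟩, L, hL, hfixL, ?_⟩
  have htL' : Tendsto (fun k : ℕ => Φ^[k + N] w) atTop (𝓝 L) := by
    simpa [Function.iterate_add_apply] using htL
  exact (tendsto_add_atTop_iff_nat N).mp htL'
end

section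
/- Let a < b and let Φ : [a, c) ∪ (c, b] → ℝ be continuous, where a < c < b, with Φ((a, c)) = (a, b) and Φ((c, b)) = (a, b) (both restrictions are surjective onto (a,b) as monotone continuous maps with limits a and b at the appropriate endpoints). Then for every finite word s₁s₂…s_n over the alphabet {L, R} (where L denotes (a, c) and R denotes (c, b)), the set of points x ∈ (a, b) with Φ^{k-1}(x) ∈ I_{s_k} for all k = 1,…,n contains a non-empty open interval. -/
open Set

lemma aux_signatures
    (Φ : ℝ → ℝ) (a b c : ℝ) (hac : a < c) (hcb : c < b)
    (hcontL : ContinuousOn Φ (Set.Ioo a c))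
    (hcontR : ContinuousOn Φ (Set.Ioo c b))
    (himL : Φ '' Set.Ioo a c = Set.Ioo a b)
    (himR : Φ '' Set.Ioo c b = Set.Ioo a b) :
    ∀ (n : ℕ) (s : Fin n → Bool),
      ∃ T : Set ℝ, IsOpen T ∧ T.Nonempty ∧ T ⊆ Set.Ioo a b ∧
        ∀ x ∈ T, ∀ k : Fin n,
          Φ^[(k : ℕ)] x ∈ (if s k then Set.Ioo c b else Set.Ioo a c) := by
  intro n
  induction n with
  | zero =>
    intro s
    exact ⟨Set.Ioo a b, isOpen_Ioo, ⟨c, hac, hcb⟩, subset_rfl, fun x _ k => k.elim0⟩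
  | succ n ih =>
    intro s
    obtain ⟨T', hTo, hTne, hTsub, hTit⟩ := ih (fun k => s k.succ)
    set I : Set ℝ := if s 0 then Set.Ioo c b else Set.Ioo a c with hI
    have hIopen : IsOpen I := by
      unfold I; split <;> exact isOpen_Ioo
    have hcont : ContinuousOn Φ I := by
      unfold I; split <;> assumption
    have himI : Φ '' I = Set.Ioo a b := by
      unfold I; split <;> assumption
    have hIsub : I ⊆ Set.Ioo a b := by
      unfold I; split
      · exact Set.Ioo_subset_Ioo (le_of_lt hac) le_rfl
      · exact Set.Ioo_subset_Ioo le_rfl (le_of_lt hcb)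
    refine ⟨I ∩ Φ ⁻¹' T', hcont.isOpen_inter_preimage hIopen hTo, ?_, fun x hx => hIsub hx.1, ?_⟩
    · obtain ⟨y, hy⟩ := hTne
      have : y ∈ Φ '' I := himI ▸ hTsub hy
      obtain ⟨x, hxI, hxy⟩ := this
      exact ⟨x, hxI, by simpa [hxy] using hy⟩
    · rintro x ⟨hxI, hxP⟩ k
      refine Fin.cases ?_ ?_ k
      · simpa using hxI
      · intro j
        have := hTit (Φ x) hxP j
        simpa [Function.iterate_succ_apply] using this

/-- If Φ maps each of the two continuity intervals (a, c) and (c, b) continuously onto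
the whole interval (a, b), then every finite itinerary over the alphabet
{L = (a, c), R = (c, b)} is realized on a non-empty open interval of initial
conditions. -/
theorem all_transient_signatures_realized
    (Φ : ℝ → ℝ) (a b c : ℝ) (hac : a < c) (hcb : c < b)
    (hcontL : ContinuousOn Φ (Set.Ioo a c))
    (hcontR : ContinuousOn Φ (Set.Ioo c b))
    (himL : Φ '' Set.Ioo a c = Set.Ioo a b)
    (himR : Φ '' Set.Ioo c b = Set.Ioo a b) :
    ∀ (n : ℕ) (s : Fin n → Bool),
      ∃ u v : ℝ, u < v ∧ Set.Ioo u v ⊆ Set.Ioo a b ∧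
        ∀ x ∈ Set.Ioo u v, ∀ k : Fin n,
          Φ^[(k : ℕ)] x ∈ (if s k then Set.Ioo c b else Set.Ioo a c) := by
  intro n s
  obtain ⟨T, hTo, ⟨x, hx⟩, hTsub, hTit⟩ :=
    aux_signatures Φ a b c hac hcb hcontL hcontR himL himR n s
  obtain ⟨ε, hε, hball⟩ := Metric.isOpen_iff.mp hTo x hx
  have hIoo : Set.Ioo (x - ε) (x + ε) ⊆ T := by
    rw [← Real.ball_eq_Ioo]; exact hball
  exact ⟨x - ε, x + ε, by linarith, fun y hy => hTsub (hIoo hy),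
    fun y hy k => hTit y (hIoo hy) k⟩
end
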